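/- arXiv:2006.03036 — 4 statements merged into one kernel-verified Lean document; each statement's English description precedes it below -/
import Mathlib

section
/- Let p be a prime, s > 1, r ≥ s, and m1, n2, n1 integers with p | m2 and p ∤ n2. Then the sum over v4 ∈ (Z/p^s Z)^× and v3 ∈ Z/p^r Z with gcd(v3, p^{r-s}) = 1 of e(m1·\bar{v3}/p^{r-s})·e((m2·\bar{v4}·v3^2 + n2·v4)/p^s) equals 0. -/
/-!
For fixed `v3` the inner sum over `v4` already vanishes. Write `ψ` for the standard additive
character of `ZMod (p ^ s)` and `q = p ^ (s - 1)`, so that `q ^ 2 = 0` (as `s ≥ 2`) and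
`m2 * q = 0` (as `p ∣ m2`). Replacing `v4` by `v4 * (1 + k q)` permutes the units and multiplies
the term at `v4` by `ψ (k * n2 * v4 * q)`; averaging over `k < p` produces, for each `v4`, the
full sum of the nontrivial `p`-th root of unity `ψ (n2 * v4 * q)` over its powers, which is `0`.
-/

/-- `e x = exp(2πi x)`. -/
noncomputable def e (x : ℝ) : ℂ := Complex.exp (2 * Real.pi * Complex.I * x)

open Finset

theorem e_intCast_div (j : ℤ) (N : ℕ) [NeZero N] :
    e ((j : ℝ) / N) = ZMod.stdAddChar (j : ZMod N) := by
  rw [ZMod.stdAddChar_coe, e]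
  push_cast
  ring_nf

theorem AddChar.sum_range_map_nsmul_eq_zero {A R : Type*} [AddMonoid A] [CommRing R]
    [IsDomain R] (ψ : AddChar A R) {c : A} {n : ℕ} (hc : n • c = 0) (hψ : ψ c ≠ 1) :
    ∑ k ∈ range n, ψ (k • c) = 0 := by
  have h := geom_sum_mul (ψ c) n
  rw [← ψ.map_nsmul_eq_pow, hc, ψ.map_zero_eq_one, sub_self] at h
  simpa only [ψ.map_nsmul_eq_pow, sub_ne_zero.2 hψ, or_false] using mul_eq_zero.1 h

theorem AddChar.sum_units_mul_inv_add_mul_eq_zero {R K : Type*} [CommRing R] [Fintype Rˣ]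
    [CommRing K] [IsDomain K] [CharZero K] (ψ : AddChar R K) {a b q : R} {n : ℕ} (hn : n ≠ 0)
    (hq : q * q = 0) (hnq : n • q = 0) (haq : a * q = 0) (hψ : ∀ v : Rˣ, ψ (b * v * q) ≠ 1) :
    ∑ v : Rˣ, ψ (a * ↑v⁻¹ + b * v) = 0 := by
  set f : Rˣ → K := fun v ↦ ψ (a * ↑v⁻¹ + b * v)
  have hshift (k : ℕ) : ∑ v, f v = ∑ v, f v * ψ (k • (b * v * q)) := by
    have hnil : IsNilpotent ((k : R) * q) := ⟨2, by rw [sq, mul_mul_mul_comm, hq, mul_zero]⟩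
    set u := hnil.isUnit_one_add.unit
    have hau : a * ↑u⁻¹ = a := by
      calc a * ↑u⁻¹ = a * u * ↑u⁻¹ := by
            simp only [u, IsUnit.unit_spec, mul_add, mul_one, mul_left_comm a, haq, mul_zero,
              add_zero]
        _ = a := by rw [mul_assoc, Units.mul_inv, mul_one]
    rw [← Fintype.sum_equiv (Equiv.mulRight u) (fun v ↦ f (v * u)) f fun _ ↦ rfl]
    refine sum_congr rfl fun v _ ↦ ?_
    simp only [f, mul_inv_rev, Units.val_mul, ← mul_assoc, hau, ← ψ.map_add_eq_mul]
    congr 1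
    simp only [u, IsUnit.unit_spec, nsmul_eq_mul]
    ring
  have hsum : (n : K) * ∑ v, f v = 0 := by
    calc (n : K) * ∑ v, f v = ∑ k ∈ range n, ∑ v, f v * ψ (k • (b * v * q)) := by
          rw [← sum_congr rfl fun k _ ↦ hshift k, sum_const, card_range, nsmul_eq_mul]
      _ = ∑ v, f v * ∑ k ∈ range n, ψ (k • (b * v * q)) := by
          simp only [mul_sum]; exact sum_comm
      _ = 0 := sum_eq_zero fun v _ ↦ by
          rw [ψ.sum_range_map_nsmul_eq_zero (by rw [← mul_smul_comm, hnq, mul_zero]) (hψ v),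
            mul_zero]
  exact (mul_eq_zero.1 hsum).resolve_left (Nat.cast_ne_zero.2 hn)

theorem ZMod.sum_units_stdAddChar_mul_inv_add_mul_eq_zero {p s : ℕ} [Fact p.Prime] (hs : 1 < s)
    {a b : ℤ} (ha : (p : ℤ) ∣ a) (hb : ¬ (p : ℤ) ∣ b) :
    ∑ v : (ZMod (p ^ s))ˣ,
      ZMod.stdAddChar ((a : ZMod (p ^ s)) * ((v⁻¹ : (ZMod (p ^ s))ˣ) : ZMod (p ^ s))
        + (b : ZMod (p ^ s)) * (v : ZMod (p ^ s))) = 0 := by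
  have hp := (Fact.out : p.Prime).pos
  have : NeZero (p ^ s) := ⟨pow_ne_zero s hp.ne'⟩
  have hps : p ^ (s - 1) * p = p ^ s := by rw [← pow_succ, Nat.sub_add_cancel hs.le]
  have hps_zero : ((p : ZMod (p ^ s))) ^ (s - 1) * p = 0 := by
    rw [← pow_succ, Nat.sub_add_cancel hs.le, ← Nat.cast_pow, ZMod.natCast_self]
  refine ZMod.stdAddChar.sum_units_mul_inv_add_mul_eq_zero (q := (p : ZMod (p ^ s)) ^ (s - 1))
    hp.ne' ?_ ?_ ?_ fun v h ↦ ?_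
  · rw [← pow_add, ← Nat.sub_add_cancel (show s ≤ s - 1 + (s - 1) by omega), pow_add,
      ← Nat.cast_pow p s, ZMod.natCast_self, mul_zero]
  · rw [nsmul_eq_mul, mul_comm, hps_zero]
  · obtain ⟨c, rfl⟩ := ha
    push_cast
    linear_combination (c : ZMod (p ^ s)) * hps_zero
  · rw [← (ZMod.stdAddChar (N := p ^ s)).map_zero_eq_one, ZMod.injective_stdAddChar.eq_iff] at h
    have hbq : ((b * p ^ (s - 1) : ℤ) : ZMod (p ^ s)) = 0 := by
      push_cast
      rw [← Units.mul_inv_cancel_right (_ * _) v, mul_right_comm (b : ZMod (p ^ s)), h, zero_mul]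
    rw [ZMod.intCast_zmod_eq_zero_iff_dvd, ← hps, mul_comm b] at hbq
    push_cast at hbq
    exact hb ((mul_dvd_mul_iff_left (pow_ne_zero _ (by exact_mod_cast hp.ne'))).1 hbq)

theorem stmt_3_general (p : ℕ) [Fact p.Prime] (m1 m2 n2 : ℤ)
    (hm2 : (p : ℤ) ∣ m2) (hn2 : ¬ (p : ℤ) ∣ n2)
    (r s : ℕ) (hs : 1 < s) :
    (∑ v4 : (ZMod (p ^ s))ˣ,
      ∑ v3 ∈ Finset.univ.filter (fun v3 : ZMod (p ^ r) => Nat.gcd v3.val (p ^ (r - s)) = 1),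
        e ((m1 * ((((v3.val : ZMod (p ^ (r - s)))⁻¹ : ZMod (p ^ (r - s))).val : ℤ)) : ℝ)
            / (p : ℝ) ^ (r - s)) *
        e (((m2 * (((v4⁻¹ : (ZMod (p ^ s))ˣ) : ZMod (p ^ s)).val : ℤ) * (v3.val : ℤ) ^ 2
            + n2 * ((v4 : ZMod (p ^ s)).val : ℤ)) : ℝ) / (p : ℝ) ^ s)) = 0 := by
  rw [sum_comm]
  refine sum_eq_zero fun v3 _ ↦ ?_
  rw [← mul_sum]
  refine mul_eq_zero_of_right _ ?_
  rw [← ZMod.sum_units_stdAddChar_mul_inv_add_mul_eq_zero hs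
    (dvd_mul_of_dvd_left hm2 ((v3.val : ℤ) ^ 2)) hn2]
  refine sum_congr rfl fun v4 _ ↦ ?_
  have : NeZero (p ^ s) := ⟨pow_ne_zero s (Fact.out : p.Prime).ne_zero⟩
  have hrep : ((m2 * (((v4⁻¹ : (ZMod (p ^ s))ˣ) : ZMod (p ^ s)).val : ℤ) * (v3.val : ℤ) ^ 2
      + n2 * ((v4 : ZMod (p ^ s)).val : ℤ) : ℤ) : ZMod (p ^ s))
      = ((m2 * (v3.val : ℤ) ^ 2 : ℤ) : ZMod (p ^ s)) * ((v4⁻¹ : (ZMod (p ^ s))ˣ) : ZMod (p ^ s))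
        + (n2 : ZMod (p ^ s)) * (v4 : ZMod (p ^ s)) := by
    push_cast [ZMod.natCast_val, ZMod.cast_id]
    ring
  rw [← hrep, ← e_intCast_div]
  push_cast
  rfl

/-- For a prime `p`, `s > 1`, `r ≥ s`, and integers with `p ∣ m2` and `p ∤ n2`, the
Kloosterman-type sum attached to `w = s_α s_β` vanishes. -/
theorem stmt_3 (p : ℕ) [Fact p.Prime] (m1 m2 n2 : ℤ)
    (hm2 : (p : ℤ) ∣ m2) (hn2 : ¬ (p : ℤ) ∣ n2)
    (r s : ℕ) (hs : 1 < s) (hsr : s ≤ r) :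
    (∑ v4 : (ZMod (p ^ s))ˣ,
      ∑ v3 ∈ Finset.univ.filter (fun v3 : ZMod (p ^ r) => Nat.gcd v3.val (p ^ (r - s)) = 1),
        e ((m1 * ((((v3.val : ZMod (p ^ (r - s)))⁻¹ : ZMod (p ^ (r - s))).val : ℤ)) : ℝ)
            / (p : ℝ) ^ (r - s)) *
        e (((m2 * (((v4⁻¹ : (ZMod (p ^ s))ˣ) : ZMod (p ^ s)).val : ℤ) * (v3.val : ℤ) ^ 2
            + n2 * ((v4 : ZMod (p ^ s)).val : ℤ)) : ℝ) / (p : ℝ) ^ s)) = 0 :=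
  stmt_3_general p m1 m2 n2 hm2 hn2 r s hs
end

section
/- Let p be an odd prime and m1, m2, n2 integers coprime to p. Let (x,y) ∈ F_p^× × F_p^× satisfy 2·m2·x^3 = m1·y and m2·x^2 = n2·y^2. Then the Hessian matrix of f(x,y) = m1·x^{-1} + m2·x^2·y^{-1} + n2·y at (x,y), namely H = [[2·m1·x^{-3} + 2·m2·y^{-1}, −2·m2·x·y^{-2}], [−2·m2·x·y^{-2}, 2·m2·x^2·y^{-3}]], is invertible over F_p. -/
/-- At a critical point `(x,y)` of `f(x,y) = m1 x⁻¹ + m2 x² y⁻¹ + n2 y` over `F_p`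
(`p` odd, `m1 m2 n2` coprime to `p`), the Hessian matrix of `f` is invertible. -/
theorem stmt_6 (p : ℕ) [Fact p.Prime] (hp : p ≠ 2) (m1 m2 n2 : ℤ)
    (hm1 : ¬ (p : ℤ) ∣ m1) (hm2 : ¬ (p : ℤ) ∣ m2) (hn2 : ¬ (p : ℤ) ∣ n2)
    (x y : ZMod p) (hx : x ≠ 0) (hy : y ≠ 0)
    (h1 : 2 * (m2 : ZMod p) * x ^ 3 = (m1 : ZMod p) * y)
    (h2 : (m2 : ZMod p) * x ^ 2 = (n2 : ZMod p) * y ^ 2) :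
    IsUnit (Matrix.det
      !![2 * (m1 : ZMod p) * x⁻¹ ^ 3 + 2 * (m2 : ZMod p) * y⁻¹, -(2 * (m2 : ZMod p) * x * y⁻¹ ^ 2);
         -(2 * (m2 : ZMod p) * x * y⁻¹ ^ 2), 2 * (m2 : ZMod p) * x ^ 2 * y⁻¹ ^ 3]) := by
  have hm2' : (m2 : ZMod p) ≠ 0 := by
    simpa [ZMod.intCast_zmod_eq_zero_iff_dvd] using hm2
  have h2ne : (2 : ZMod p) ≠ 0 := by
    have hprime := (Fact.out : p.Prime)
    have : ¬ (p ∣ 2) := by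
      rw [Nat.prime_dvd_prime_iff_eq hprime Nat.prime_two]
      exact hp
    have h2 := (ZMod.natCast_eq_zero_iff 2 p).not.2 this
    simpa using h2
  rw [Matrix.det_fin_two_of]
  have key : (2 * (m1 : ZMod p) * x⁻¹ ^ 3 + 2 * (m2 : ZMod p) * y⁻¹) *
        (2 * (m2 : ZMod p) * x ^ 2 * y⁻¹ ^ 3) -
      (-(2 * (m2 : ZMod p) * x * y⁻¹ ^ 2)) * (-(2 * (m2 : ZMod p) * x * y⁻¹ ^ 2)) =
      2 * 2 * 2 * (m2 : ZMod p) ^ 2 * x ^ 2 * y⁻¹ ^ 4 := by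
    have hm1y : (m1 : ZMod p) = 2 * (m2 : ZMod p) * x ^ 3 * y⁻¹ := by
      field_simp
      linear_combination -h1
    have hxX : x * x⁻¹ = 1 := mul_inv_cancel₀ hx
    linear_combination (4 * (m2 : ZMod p) * x ^ 2 * x⁻¹ ^ 3 * y⁻¹ ^ 3) * hm1y +
      (8 * (m2 : ZMod p) ^ 2 * x ^ 2 * y⁻¹ ^ 4 * ((x * x⁻¹) ^ 2 + x * x⁻¹ + 1)) * hxX
  rw [key]
  refine isUnit_iff_ne_zero.2 ?_
  simp [h2ne, hm2', hx, hy, pow_eq_zero_iff, inv_eq_zero]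
end

section
/- Let n = diag(p^{-r}, p^{r−s}, p^{r}, p^{s−r})·w₀ where w₀ is the long Weyl element of Sp(4, Q_p), and let ψ, ψ' be characters of U(Q_p) trivial on U(Z_p). Then Kl_p(n, ψ, ψ') = Kl_p(n, ψ', ψ): the Sp(4) Kloosterman sum attached to the long Weyl element is symmetric in its two characters. -/
open Matrix

variable (p : ℕ) [Fact p.Prime]

/-- The standard unipotent subgroup `U(ℚ_p)` of `Sp(4, ℚ_p)` (indices `Fin 2 ⊕ Fin 2`,
`inl` before `inr`): upper-triangular unipotent symplectic matrices. -/
def InU (M : Matrix (Fin 2 ⊕ Fin 2) (Fin 2 ⊕ Fin 2) ℚ_[p]) : Prop :=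
  M ∈ Matrix.symplecticGroup (Fin 2) ℚ_[p] ∧ (∀ i, M i i = 1) ∧
    ∀ i j : Fin 2 ⊕ Fin 2, Sum.Lex (· < ·) (· < ·) j i → M i j = 0

/-- `U(ℤ_p)`: elements of `U(ℚ_p)` with all entries of norm at most 1. -/
def InUZ (M : Matrix (Fin 2 ⊕ Fin 2) (Fin 2 ⊕ Fin 2) ℚ_[p]) : Prop :=
  InU p M ∧ ∀ i j, ‖M i j‖ ≤ 1

/-- A character of `U(ℚ_p)` trivial on `U(ℤ_p)`. -/
def IsCharacterOfU (ψ : Matrix (Fin 2 ⊕ Fin 2) (Fin 2 ⊕ Fin 2) ℚ_[p] → ℂ) : Prop :=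
  (∀ a b, InU p a → InU p b → ψ (a * b) = ψ a * ψ b) ∧ ∀ a, InUZ p a → ψ a = 1

/-- The representative `n_{w₀,r,s} = diag(p^{-r}, p^{r-s}, p^r, p^{s-r})·w₀` of the
long Weyl element of `Sp(4, ℚ_p)`. -/
noncomputable def nW0 (r s : ℤ) : Matrix (Fin 2 ⊕ Fin 2) (Fin 2 ⊕ Fin 2) ℚ_[p] :=
  Matrix.fromBlocks 0 (Matrix.diagonal ![-(p : ℚ_[p]) ^ (-r), -(p : ℚ_[p]) ^ (r - s)])
    (Matrix.diagonal ![(p : ℚ_[p]) ^ r, (p : ℚ_[p]) ^ (s - r)]) 0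

/-- The double-coset equivalence on `C(n)`: `x ∼ y` iff `y = γ·x·δ` with
`γ ∈ U(ℤ_p)` and `δ ∈ U_n(ℤ_p) = U(ℤ_p)` (for the long Weyl element `U_n = U`). -/
def KlRel (x y : Matrix (Fin 2 ⊕ Fin 2) (Fin 2 ⊕ Fin 2) ℚ_[p]) : Prop :=
  ∃ γ δ, InUZ p γ ∧ InUZ p δ ∧ y = γ * x * δ

/-- Membership in `C(n) = U(ℚ_p)·n·U(ℚ_p) ∩ Sp(4, ℤ_p)`. -/
def InC (n x : Matrix (Fin 2 ⊕ Fin 2) (Fin 2 ⊕ Fin 2) ℚ_[p]) : Prop :=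
  x ∈ Matrix.symplecticGroup (Fin 2) ℚ_[p] ∧ (∀ i j, ‖x i j‖ ≤ 1) ∧
    ∃ a b, InU p a ∧ InU p b ∧ x = a * n * b

/-!
Let `ι(M)_{ij} = M_{σj, σi}`, where `σ` exchanges the two `2 × 2` blocks. This is an
anti-involution of `4 × 4` matrices preserving `Sp(4)`, integrality of entries, `n` and every
element of `U`, so `ι(a n b) = b n a`. Hence `ι` induces an involution of
`U(ℤ_p)\C(n)/U(ℤ_p)`, and by uniqueness of Bruhat coordinates it exchanges `u` and `u'` up to
factors in `U(ℤ_p)`, on which `ψ` and `ψ'` are trivial. Reindexing the sum by this involution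
exchanges `ψ` and `ψ'`.
-/

namespace Matrix

section SwapTranspose

variable {n R : Type*}

def swapTranspose (M : Matrix (n ⊕ n) (n ⊕ n) R) : Matrix (n ⊕ n) (n ⊕ n) R :=
  Mᵀ.submatrix Sum.swap Sum.swap

@[simp]
theorem swapTranspose_apply (M : Matrix (n ⊕ n) (n ⊕ n) R) (i j : n ⊕ n) :
    M.swapTranspose i j = M j.swap i.swap :=
  rfl

@[simp]
theorem swapTranspose_swapTranspose (M : Matrix (n ⊕ n) (n ⊕ n) R) :
    M.swapTranspose.swapTranspose = M := by
  ext i j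
  simp

theorem swapTranspose_transpose (M : Matrix (n ⊕ n) (n ⊕ n) R) :
    Mᵀ.swapTranspose = M.swapTransposeᵀ :=
  rfl

theorem swapTranspose_fromBlocks (A B C D : Matrix n n R) :
    (fromBlocks A B C D).swapTranspose = fromBlocks Dᵀ Bᵀ Cᵀ Aᵀ := by
  ext (i | i) (j | j) <;> rfl

theorem swapTranspose_J [DecidableEq n] [CommRing R] : (J n R).swapTranspose = J n R := by
  simp [J, swapTranspose_fromBlocks]

variable [Fintype n] [CommRing R]

theorem swapTranspose_mul (A B : Matrix (n ⊕ n) (n ⊕ n) R) :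
    (A * B).swapTranspose = B.swapTranspose * A.swapTranspose := by
  rw [swapTranspose, transpose_mul, ← submatrix_mul_equiv _ _ _ (Equiv.sumComm n n)]
  rfl

theorem swapTranspose_mul_mul (A B C : Matrix (n ⊕ n) (n ⊕ n) R) :
    (A * B * C).swapTranspose = C.swapTranspose * B.swapTranspose * A.swapTranspose := by
  rw [swapTranspose_mul, swapTranspose_mul, Matrix.mul_assoc]

variable [DecidableEq n]

theorem swapTranspose_mem_symplecticGroup {A : Matrix (n ⊕ n) (n ⊕ n) R}
    (hA : A ∈ symplecticGroup n R) : A.swapTranspose ∈ symplecticGroup n R := by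
  rw [SymplecticGroup.mem_iff]
  calc A.swapTranspose * J n R * A.swapTransposeᵀ = (Aᵀ * J n R * A).swapTranspose := by
        rw [swapTranspose_mul_mul, swapTranspose_J, swapTranspose_transpose]
    _ = J n R := by rw [SymplecticGroup.mem_iff'.1 hA, swapTranspose_J]

end SwapTranspose

section Blocks

variable {n R : Type*} [Fintype n] [DecidableEq n] [CommRing R]

theorem fromBlocks_zero₂₁_mem_symplecticGroup_iff (A B D : Matrix n n R) :
    fromBlocks A B 0 D ∈ symplecticGroup n R ↔ Aᵀ * D = 1 ∧ Dᵀ * B = Bᵀ * D := by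
  rw [SymplecticGroup.mem_iff', J, fromBlocks_transpose, fromBlocks_multiply,
    fromBlocks_multiply]
  simp only [fromBlocks_inj, transpose_zero, zero_mul, add_zero, mul_zero, Matrix.mul_neg,
    Matrix.mul_one, zero_add, true_and, Matrix.neg_mul, neg_inj, ← sub_eq_add_neg, zero_sub,
    sub_eq_zero]
  rw [← transpose_eq_one (M := Dᵀ * A), transpose_mul, transpose_transpose, and_self_left]

theorem fromBlocks_one_mul_fromBlocks_one (S T : Matrix n n R) :
    (fromBlocks 1 S 0 1 * fromBlocks 1 T 0 1 : Matrix (n ⊕ n) (n ⊕ n) R) =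
      fromBlocks 1 (S + T) 0 1 := by
  simp [fromBlocks_multiply, add_comm]

theorem eq_and_eq_of_fromBlocks_one_mul_antidiagonal_mul_eq {B C S S' T T' : Matrix n n R}
    (hC : IsUnit C)
    (h : (fromBlocks 1 S 0 1 * fromBlocks 0 B C 0 * fromBlocks 1 T 0 1 :
        Matrix (n ⊕ n) (n ⊕ n) R) =
      fromBlocks 1 S' 0 1 * fromBlocks 0 B C 0 * fromBlocks 1 T' 0 1) :
    S = S' ∧ T = T' := by
  simp only [fromBlocks_multiply, fromBlocks_inj, Matrix.one_mul, Matrix.zero_mul, add_zero,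
    Matrix.mul_zero, zero_add, Matrix.mul_one] at h
  exact ⟨hC.mul_right_cancel h.1, hC.mul_left_cancel h.2.2.2⟩

end Blocks

theorem eq_zero_and_eq_zero_of_transpose_mul_eq_one_fin_two {R : Type*} [CommRing R]
    {a d : R} (h : !![1, a; 0, 1]ᵀ * !![1, d; 0, 1] = 1) : a = 0 ∧ d = 0 := by
  have h01 := congr_fun₂ h 0 1
  have h10 := congr_fun₂ h 1 0
  simp [Matrix.mul_apply, Fin.sum_univ_two] at h01 h10
  exact ⟨h10, h01⟩

theorem norm_mul_apply_le_one {m K : Type*} [Fintype m] [NormedRing K] [IsUltrametricDist K]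
    {A B : Matrix m m K} (hA : ∀ i j, ‖A i j‖ ≤ 1) (hB : ∀ i j, ‖B i j‖ ≤ 1) (i j : m) :
    ‖(A * B) i j‖ ≤ 1 :=
  IsUltrametricDist.norm_sum_le_of_forall_le_of_nonneg zero_le_one fun k _ =>
    (norm_mul_le _ _).trans (mul_le_one₀ (hA i k) (norm_nonneg _) (hB k j))

end Matrix

section Sp4

variable {p} {r s : ℤ}
  {M a b a' b' c d x y z γ δ : Matrix (Fin 2 ⊕ Fin 2) (Fin 2 ⊕ Fin 2) ℚ_[p]}
  {ψ : Matrix (Fin 2 ⊕ Fin 2) (Fin 2 ⊕ Fin 2) ℚ_[p] → ℂ}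

theorem inU_iff :
    InU p M ↔ ∃ S : Matrix (Fin 2) (Fin 2) ℚ_[p], Sᵀ = S ∧ M = fromBlocks 1 S 0 1 := by
  constructor
  · rintro ⟨hsp, hdiag, hlow⟩
    obtain ⟨A, B, D, rfl⟩ : ∃ A B D, M = fromBlocks A B 0 D :=
      ⟨_, _, _, by rw [← fromBlocks_toBlocks M]; congr; ext i j; exact hlow _ _ (.sep _ _)⟩
    simp only [Sum.forall, fromBlocks_apply₁₁, fromBlocks_apply₂₂, Fin.forall_fin_two] at hdiag
    obtain ⟨⟨hA₀, hA₁⟩, hD₀, hD₁⟩ := hdiag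
    have hA : A = !![1, A 0 1; 0, 1] := by
      rw [eta_fin_two A, hA₀, hA₁]
      simpa using hlow _ _ (Sum.Lex.inl Fin.zero_lt_one)
    have hD : D = !![1, D 0 1; 0, 1] := by
      rw [eta_fin_two D, hD₀, hD₁]
      simpa using hlow _ _ (Sum.Lex.inr Fin.zero_lt_one)
    rw [fromBlocks_zero₂₁_mem_symplecticGroup_iff] at hsp
    obtain ⟨ha, hd⟩ := eq_zero_and_eq_zero_of_transpose_mul_eq_one_fin_two (hA ▸ hD ▸ hsp.1)
    rw [ha, ← one_fin_two] at hA
    rw [hd, ← one_fin_two] at hD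
    subst hA hD
    exact ⟨B, by simpa using hsp.2.symm, rfl⟩
  · rintro ⟨S, hS, rfl⟩
    refine ⟨?_, ?_, ?_⟩
    · rw [fromBlocks_zero₂₁_mem_symplecticGroup_iff]
      simp [hS]
    · rintro (i | i) <;> simp
    · rintro _ _ (⟨h⟩ | ⟨h⟩ | _) <;> simp [one_apply_ne, ne_of_gt, *]

theorem InU.mul (ha : InU p a) (hb : InU p b) : InU p (a * b) := by
  obtain ⟨S, hS, rfl⟩ := inU_iff.1 ha
  obtain ⟨T, hT, rfl⟩ := inU_iff.1 hb
  rw [fromBlocks_one_mul_fromBlocks_one]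
  exact inU_iff.2 ⟨S + T, by rw [transpose_add, hS, hT], rfl⟩

theorem InUZ.mul (ha : InUZ p a) (hb : InUZ p b) : InUZ p (a * b) :=
  ⟨ha.1.mul hb.1, norm_mul_apply_le_one ha.2 hb.2⟩

theorem InU.swapTranspose_eq (h : InU p M) : M.swapTranspose = M := by
  obtain ⟨S, hS, rfl⟩ := inU_iff.1 h
  simp [swapTranspose_fromBlocks, hS]

theorem swapTranspose_mul_nW0_mul (ha : InU p a) (hb : InU p b) :
    (a * nW0 p r s * b).swapTranspose = b * nW0 p r s * a := by
  rw [swapTranspose_mul_mul, ha.swapTranspose_eq, hb.swapTranspose_eq]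
  simp [nW0, swapTranspose_fromBlocks]

theorem eq_and_eq_of_mul_nW0_mul_eq (ha : InU p a) (hb : InU p b) (ha' : InU p a')
    (hb' : InU p b') (h : a * nW0 p r s * b = a' * nW0 p r s * b') :
    a = a' ∧ b = b' := by
  obtain ⟨S, -, rfl⟩ := inU_iff.1 ha
  obtain ⟨T, -, rfl⟩ := inU_iff.1 hb
  obtain ⟨S', -, rfl⟩ := inU_iff.1 ha'
  obtain ⟨T', -, rfl⟩ := inU_iff.1 hb'
  have hp : (p : ℚ_[p]) ≠ 0 := Nat.cast_ne_zero.2 (Fact.out : p.Prime).ne_zero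
  have hC : IsUnit (diagonal ![(p : ℚ_[p]) ^ r, (p : ℚ_[p]) ^ (s - r)]) :=
    isUnit_diagonal.2 <| Pi.isUnit_iff.2 fun i => by
      fin_cases i <;> exact (zpow_ne_zero _ hp).isUnit
  obtain ⟨rfl, rfl⟩ := eq_and_eq_of_fromBlocks_one_mul_antidiagonal_mul_eq hC h
  exact ⟨rfl, rfl⟩

theorem InC.swapTranspose (h : InC p (nW0 p r s) x) : InC p (nW0 p r s) x.swapTranspose := by
  obtain ⟨hsp, hint, a, b, ha, hb, rfl⟩ := h
  exact ⟨swapTranspose_mem_symplecticGroup hsp, fun i j => hint _ _, b, a, hb, ha,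
    swapTranspose_mul_nW0_mul ha hb⟩

theorem KlRel.swapTranspose (h : KlRel p x y) : KlRel p x.swapTranspose y.swapTranspose := by
  obtain ⟨γ, δ, hγ, hδ, rfl⟩ := h
  exact ⟨δ, γ, hδ, hγ, by
    rw [swapTranspose_mul_mul, hγ.1.swapTranspose_eq, hδ.1.swapTranspose_eq]⟩

theorem KlRel.trans (hxy : KlRel p x y) (hyz : KlRel p y z) : KlRel p x z := by
  obtain ⟨γ, δ, hγ, hδ, rfl⟩ := hxy
  obtain ⟨γ', δ', hγ', hδ', rfl⟩ := hyz
  exact ⟨γ' * γ, δ * δ', hγ'.mul hγ, hδ.mul hδ', by simp only [Matrix.mul_assoc]⟩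

theorem IsCharacterOfU.map_inUZ_mul (hψ : IsCharacterOfU p ψ) (hγ : InUZ p γ) (ha : InU p a) :
    ψ (γ * a) = ψ a := by
  rw [hψ.1 γ a hγ.1 ha, hψ.2 γ hγ, one_mul]

theorem IsCharacterOfU.map_mul_inUZ (hψ : IsCharacterOfU p ψ) (ha : InU p a) (hδ : InUZ p δ) :
    ψ (a * δ) = ψ a := by
  rw [hψ.1 a δ ha hδ.1, hψ.2 δ hδ, mul_one]

theorem exists_inUZ_of_klRel_swapTranspose (ha : InU p a) (hb : InU p b) (hc : InU p c)
    (hd : InU p d) (hx : x = a * nW0 p r s * b)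
    (hy : y = c * nW0 p r s * d) (h : KlRel p x.swapTranspose y) :
    ∃ γ δ, InUZ p γ ∧ InUZ p δ ∧ c = γ * b ∧ d = a * δ := by
  obtain ⟨γ, δ, hγ, hδ, rfl⟩ := h
  rw [hx, swapTranspose_mul_nW0_mul ha hb] at hy
  obtain ⟨hc', hd'⟩ := eq_and_eq_of_mul_nW0_mul_eq hc hd (hγ.1.mul hb) (ha.mul hδ.1)
    (by rw [← hy]; simp only [Matrix.mul_assoc])
  exact ⟨γ, δ, hγ, hδ, hc', hd'⟩

end Sp4

/-- Symmetry of the Sp(4) Kloosterman sum attached to the long Weyl element: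
`Kl_p(n, ψ, ψ') = Kl_p(n, ψ', ψ)`. The sum over `X(n)` is realized by a finite set `R`
of representatives of `U(ℤ_p)\C(n)/U(ℤ_p)`, with Bruhat decomposition data `u, u'`. -/
theorem stmt_15 (r s : ℤ)
    (R : Finset (Matrix (Fin 2 ⊕ Fin 2) (Fin 2 ⊕ Fin 2) ℚ_[p]))
    (u u' : Matrix (Fin 2 ⊕ Fin 2) (Fin 2 ⊕ Fin 2) ℚ_[p] →
      Matrix (Fin 2 ⊕ Fin 2) (Fin 2 ⊕ Fin 2) ℚ_[p])
    (hmem : ∀ x ∈ R, InC p (nW0 p r s) x)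
    (hdec : ∀ x ∈ R, InU p (u x) ∧ InU p (u' x) ∧ x = u x * nW0 p r s * u' x)
    (hcover : ∀ x, InC p (nW0 p r s) x → ∃ y ∈ R, KlRel p x y)
    (hsep : ∀ x ∈ R, ∀ y ∈ R, KlRel p x y → x = y)
    (ψ ψ' : Matrix (Fin 2 ⊕ Fin 2) (Fin 2 ⊕ Fin 2) ℚ_[p] → ℂ)
    (hψ : IsCharacterOfU p ψ) (hψ' : IsCharacterOfU p ψ') :
    (∑ x ∈ R, ψ (u x) * ψ' (u' x)) = ∑ x ∈ R, ψ' (u x) * ψ (u' x) := by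
  have hrep : ∀ x ∈ R, ∃ y ∈ R, KlRel p x.swapTranspose y := fun x hx =>
    hcover _ (hmem x hx).swapTranspose
  choose! g hgR hgK using hrep
  have hg : ∀ x ∈ R, g (g x) = x := fun x hx => by
    refine (hsep x hx _ (hgR _ (hgR x hx)) (KlRel.trans ?_ (hgK _ (hgR x hx)))).symm
    simpa using (hgK x hx).swapTranspose
  refine Finset.sum_nbij' g g hgR hgR hg hg fun x hx => ?_
  obtain ⟨hux, hu'x, hx'⟩ := hdec x hx
  obtain ⟨hugx, hu'gx, hgx'⟩ := hdec (g x) (hgR x hx)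
  obtain ⟨γ, δ, hγ, hδ, hu, hu'⟩ :=
    exists_inUZ_of_klRel_swapTranspose hux hu'x hugx hu'gx hx' hgx' (hgK x hx)
  rw [hu, hu', hψ'.map_inUZ_mul hγ hu'x, hψ.map_mul_inUZ hux hδ, mul_comm]
end

section
/- Let p be a prime, s > r ≥ 1, and let a, b be integers with s − r < a < s/2, 0 ≤ b ≤ r, and a + b ≤ r. Then there are no pairs (v3, v4) with v3 ∈ (Z/p^r Z)^× and v4 ∈ Z/p^r Z satisfying ord_p(v4) ≥ a, v4 = p^{r−b}·unit, and gcd(p^{r−a}, p^a·v3 + v4) = p^{r+a−s}. -/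
/-- Case III(b) for `w = s_α s_β s_α`: when `s − r < a < s/2`, there are no pairs
`(v3, v4)` with `v3` a unit, `v4 = p^{r−b}·(unit)` of valuation `≥ a`, `a + b ≤ r`,
satisfying `gcd(p^{r−a}, p^a·v3 + v4) = p^{r+a−s}`; the stratum is empty. -/
theorem stmt_17 (p : ℕ) (hp : p.Prime) (r s a b : ℕ) (hr : 1 ≤ r) (hrs : r < s)
    (ha1 : s < r + a) (ha2 : 2 * a < s) (hb : b ≤ r) (hab : a + b ≤ r)
    (v3 w : ℤ) (hv3 : ¬ (p : ℤ) ∣ v3) (hw : ¬ (p : ℤ) ∣ w)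
    (hord : (a : ℤ) ≤ (r - b : ℕ))
    (hgcd : Int.gcd ((p : ℤ) ^ (r - a)) ((p : ℤ) ^ a * v3 + (p : ℤ) ^ (r - b) * w)
      = p ^ (r + a - s)) : False := by
  set k := r + a - s with hk
  have hab' : a ≤ r := le_trans (Nat.le_add_right a b) hab
  have hord' : a ≤ r - b := by exact_mod_cast hord
  have h1 : k + 1 ≤ a := by omega
  have h2 : k + 1 ≤ r - a := by omega
  have d1 : (p : ℤ) ^ (k + 1) ∣ (p : ℤ) ^ (r - a) := pow_dvd_pow _ h2
  have d2 : (p : ℤ) ^ (k + 1) ∣ (p : ℤ) ^ a * v3 + (p : ℤ) ^ (r - b) * w := by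
    exact dvd_add (Dvd.dvd.mul_right (pow_dvd_pow _ h1) _)
      (Dvd.dvd.mul_right (pow_dvd_pow _ (le_trans h1 hord')) _)
  have hd : (p : ℕ) ^ (k + 1) ∣ Int.gcd ((p : ℤ) ^ (r - a))
      ((p : ℤ) ^ a * v3 + (p : ℤ) ^ (r - b) * w) := by
    have := Int.dvd_coe_gcd d1 d2
    have := Int.natAbs_dvd_natAbs.mpr this
    simpa [Int.natAbs_pow] using this
  rw [hgcd] at hd
  have hle := Nat.le_of_dvd (Nat.pow_pos hp.pos) hd
  exact absurd hle (not_le.mpr (Nat.pow_lt_pow_right hp.one_lt (Nat.lt_succ_self k)))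
end
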